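/- arXiv:2111.05828 — 3 statements merged into one kernel-verified Lean document; each statement's English description precedes it below -/
import Mathlib

section
/- Let u : ℝ → ℂ be a C² solution of i c u' + u'' + u·V = 0 on ℝ, where c ∈ ℝ and V : ℝ → ℝ is continuous. Writing u = u₁ + i u₂, the function u₁u₂' − u₂u₁' − (c/2)(1−|u|²) has zero derivative on ℝ; consequently, if u₁u₂' − u₂u₁' − (c/2)(1−|u|²) tends to 0 at +∞, then (c/2)(1−|u|²) = u₁u₂' − u₂u₁' = −⟨i u', u⟩ everywhere on ℝ. -/
/-!
The Wronskian-type quantity `Im (conj u · u') = u₁u₂' − u₂u₁'` has derivative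
`Im (conj u · u'')`, since `conj u' · u'` is real. Substituting `u'' = −i c u' − V u`, the
term `V |u|²` is real again and only `−c Re (conj u · u') = −(c/2) (|u|²)'` survives, which
cancels the derivative of `−(c/2)(1 − |u|²)`. A function with zero derivative is constant, so
its limit at `+∞` is its value everywhere.
-/

open Complex ComplexConjugate Filter Topology

theorem HasDerivAt.complex_re {u : ℝ → ℂ} {u' : ℂ} {x : ℝ} (h : HasDerivAt u u' x) :
    HasDerivAt (fun y => (u y).re) u'.re x :=
  reCLM.hasFDerivAt.comp_hasDerivAt x h

theorem HasDerivAt.complex_im {u : ℝ → ℂ} {u' : ℂ} {x : ℝ} (h : HasDerivAt u u' x) :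
    HasDerivAt (fun y => (u y).im) u'.im x :=
  imCLM.hasFDerivAt.comp_hasDerivAt x h

theorem deriv_complex_re {u : ℝ → ℂ} (h : Differentiable ℝ u) :
    deriv (fun y => (u y).re) = fun y => (deriv u y).re :=
  funext fun y => (h y).hasDerivAt.complex_re.deriv

theorem deriv_complex_im {u : ℝ → ℂ} (h : Differentiable ℝ u) :
    deriv (fun y => (u y).im) = fun y => (deriv u y).im :=
  funext fun y => (h y).hasDerivAt.complex_im.deriv

theorem Complex.conj_mul_im (z w : ℂ) : (conj z * w).im = z.re * w.im - z.im * w.re := by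
  simp only [mul_im, conj_re, conj_im]
  ring

theorem Complex.neg_re_I_mul_mul_conj (z w : ℂ) : -(I * w * conj z).re = (conj z * w).im := by
  simp only [mul_re, mul_im, I_re, I_im, conj_re, conj_im]
  ring

theorem hasDerivAt_im_conj_mul_deriv_sub_norm_sq {u : ℝ → ℂ} {x c v : ℝ}
    (hu : DifferentiableAt ℝ u x) (hu' : DifferentiableAt ℝ (deriv u) x)
    (heq : I * c * deriv u x + deriv (deriv u) x + u x * v = 0) :
    HasDerivAt (fun y => (conj (u y) * deriv u y).im - c / 2 * (1 - ‖u y‖ ^ 2)) 0 x := by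
  have hwronskian := (hu.hasDerivAt.star.mul hu'.hasDerivAt).complex_im
  have hnorm := (hu.hasDerivAt.norm_sq.const_sub 1).const_mul (c / 2)
  have hu'' : deriv (deriv u) x = -(I * c * deriv u x) - u x * v := by linear_combination heq
  refine (hwronskian.sub hnorm).congr_deriv ?_
  rw [hu'', Complex.inner]
  simp only [star_def, mul_re, mul_im, neg_re, neg_im, add_im, sub_re, sub_im, conj_re, conj_im,
    I_re, I_im, ofReal_re, ofReal_im]
  ring

theorem eq_of_tendsto_atTop_of_hasDerivAt_zero {E : Type*} [NormedAddCommGroup E]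
    [NormedSpace ℝ E] {f : ℝ → E} {l : E} (hf : ∀ x, HasDerivAt f 0 x)
    (hlim : Tendsto f atTop (𝓝 l)) (x : ℝ) : f x = l := by
  have hconst : f = fun _ => f x :=
    funext fun y => is_const_of_deriv_eq_zero (fun z => (hf z).differentiableAt)
      (fun z => (hf z).deriv) y x
  rw [hconst] at hlim
  exact tendsto_nhds_unique tendsto_const_nhds hlim

theorem stmt2_general (c : ℝ) (V : ℝ → ℝ) (u : ℝ → ℂ)
    (hu : ContDiff ℝ 2 u)
    (heq : ∀ x : ℝ,
      Complex.I * (c : ℂ) * deriv u x + deriv (deriv u) x + u x * (V x : ℂ) = 0) :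
    (∀ x : ℝ, deriv (fun y : ℝ =>
        (u y).re * deriv (fun z : ℝ => (u z).im) y
          - (u y).im * deriv (fun z : ℝ => (u z).re) y
          - c / 2 * (1 - (‖u y‖) ^ 2)) x = 0) ∧
    (Filter.Tendsto (fun y : ℝ =>
        (u y).re * deriv (fun z : ℝ => (u z).im) y
          - (u y).im * deriv (fun z : ℝ => (u z).re) y
          - c / 2 * (1 - (‖u y‖) ^ 2)) Filter.atTop (nhds 0) →
      ∀ x : ℝ,
        c / 2 * (1 - (‖u x‖) ^ 2) =
          (u x).re * deriv (fun z : ℝ => (u z).im) x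
            - (u x).im * deriv (fun z : ℝ => (u z).re) x ∧
        c / 2 * (1 - (‖u x‖) ^ 2) =
          -(Complex.I * deriv u x * (starRingEnd ℂ) (u x)).re) := by
  have hdiff : Differentiable ℝ u := hu.differentiable two_ne_zero
  have hre := deriv_complex_re hdiff
  have him := deriv_complex_im hdiff
  have hform : (fun y : ℝ => (u y).re * deriv (fun z : ℝ => (u z).im) y
      - (u y).im * deriv (fun z : ℝ => (u z).re) y - c / 2 * (1 - (‖u y‖) ^ 2))
      = fun y => (conj (u y) * deriv u y).im - c / 2 * (1 - ‖u y‖ ^ 2) := by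
    simp only [hre, him, conj_mul_im]
  have hzero : ∀ x, HasDerivAt (fun y => (conj (u y) * deriv u y).im
      - c / 2 * (1 - ‖u y‖ ^ 2)) 0 x := fun x =>
    hasDerivAt_im_conj_mul_deriv_sub_norm_sq (hdiff x) (hu.differentiable_deriv_two x) (heq x)
  refine ⟨fun x => hform ▸ (hzero x).deriv, fun hlim x => ?_⟩
  have hx := eq_of_tendsto_atTop_of_hasDerivAt_zero hzero (hform ▸ hlim) x
  rw [hre, him, ← conj_mul_im, neg_re_I_mul_mul_conj]
  constructor <;> linarith

/-- If `u : ℝ → ℂ` is a C² solution of `i c u' + u'' + u V = 0` with `V`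
real continuous, then writing `u = u₁ + i u₂`, the function
`u₁u₂' − u₂u₁' − (c/2)(1−|u|²)` has zero derivative on `ℝ`; consequently, if it tends
to `0` at `+∞`, then `(c/2)(1−|u|²) = u₁u₂' − u₂u₁' = −⟨i u', u⟩` everywhere. -/
theorem stmt2 (c : ℝ) (V : ℝ → ℝ) (hV : Continuous V) (u : ℝ → ℂ)
    (hu : ContDiff ℝ 2 u)
    (heq : ∀ x : ℝ,
      Complex.I * (c : ℂ) * deriv u x + deriv (deriv u) x + u x * (V x : ℂ) = 0) :
    (∀ x : ℝ, deriv (fun y : ℝ =>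
        (u y).re * deriv (fun z : ℝ => (u z).im) y
          - (u y).im * deriv (fun z : ℝ => (u z).re) y
          - c / 2 * (1 - (‖u y‖) ^ 2)) x = 0) ∧
    (Filter.Tendsto (fun y : ℝ =>
        (u y).re * deriv (fun z : ℝ => (u z).im) y
          - (u y).im * deriv (fun z : ℝ => (u z).re) y
          - c / 2 * (1 - (‖u y‖) ^ 2)) Filter.atTop (nhds 0) →
      ∀ x : ℝ,
        c / 2 * (1 - (‖u x‖) ^ 2) =
          (u x).re * deriv (fun z : ℝ => (u z).im) x
            - (u x).im * deriv (fun z : ℝ => (u z).re) x ∧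
        c / 2 * (1 - (‖u x‖) ^ 2) =
          -(Complex.I * deriv u x * (starRingEnd ℂ) (u x)).re) :=
  stmt2_general c V u hu heq
end

section
/- Let c ∈ ℝ, let V : ℝ → ℝ be continuous, and let u : ℝ → ℂ be a C² solution of i c u' + u'' + u·V = 0 on ℝ. Set η = 1 − |u|² and K = |u'|². Assume η, η', K, V all tend to 0 at +∞ and that (c/2)η = −⟨i u', u⟩ on ℝ. Then c²η² + (η')² = 4K(1−η) on ℝ. -/
/-! The hypothesis on `c η` pins down `Im (u' ū) = c η / 2`, while `η' = -2 Re (u' ū)`.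
Hence `c² η² + η'² = 4 |u' ū|² = 4 |u'|² |u|² = 4 K (1 - η)`. -/

open ComplexConjugate

lemma Complex.re_sq_add_im_sq_mul_conj (w z : ℂ) :
    (w * conj z).re ^ 2 + (w * conj z).im ^ 2 = ‖w‖ ^ 2 * ‖z‖ ^ 2 := by
  rw [← Complex.norm_conj z, ← mul_pow, ← norm_mul, Complex.sq_norm, Complex.normSq_apply]
  ring

lemma HasDerivAt.one_sub_norm_sq {u : ℝ → ℂ} {u' : ℂ} {x : ℝ} (hu : HasDerivAt u u' x) :
    HasDerivAt (fun y => 1 - ‖u y‖ ^ 2) (-2 * (u' * conj (u x)).re) x := by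
  refine ((hasDerivAt_const x (1 : ℝ)).sub hu.norm_sq).congr_deriv ?_
  rw [Complex.inner]
  ring

theorem stmt4_general (c : ℝ) (u : ℝ → ℂ)
    (hu : ContDiff ℝ 2 u)
    (η K : ℝ → ℝ)
    (hη : ∀ x : ℝ, η x = 1 - ‖u x‖ ^ 2)
    (hK : ∀ x : ℝ, K x = ‖deriv u x‖ ^ 2)
    (h5 : ∀ x : ℝ, c / 2 * η x = -(Complex.I * deriv u x * (starRingEnd ℂ) (u x)).re) :
    ∀ x : ℝ, c ^ 2 * η x ^ 2 + (deriv η x) ^ 2 = 4 * K x * (1 - η x) := by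
  intro x
  set p := deriv u x * conj (u x)
  have hderiv : deriv η x = -2 * p.re := by
    rw [funext hη]
    exact ((hu.differentiable (by norm_num)).differentiableAt.hasDerivAt.one_sub_norm_sq).deriv
  have hcη : c * η x = 2 * p.im := by
    have h := h5 x
    rw [mul_assoc, Complex.I_mul_re] at h
    linarith
  calc c ^ 2 * η x ^ 2 + deriv η x ^ 2 = 4 * (p.re ^ 2 + p.im ^ 2) := by
        rw [hderiv, ← mul_pow, hcη]; ring
    _ = 4 * K x * (1 - η x) := by
        rw [Complex.re_sq_add_im_sq_mul_conj, hK, hη]; ring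

/-- Let `u` be a C² solution of `i c u' + u'' + u V = 0` on `ℝ` (`V` real
continuous), `η = 1 − |u|²`, `K = |u'|²`. If `η, η', K, V` all tend to `0` at `+∞` and
`(c/2)η = −⟨i u', u⟩` on `ℝ`, then `c²η² + (η')² = 4K(1−η)` on `ℝ`. -/
theorem stmt4 (c : ℝ) (V : ℝ → ℝ) (hV : Continuous V) (u : ℝ → ℂ)
    (hu : ContDiff ℝ 2 u)
    (heq : ∀ x : ℝ,
      Complex.I * (c : ℂ) * deriv u x + deriv (deriv u) x + u x * (V x : ℂ) = 0)
    (η K : ℝ → ℝ)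
    (hη : ∀ x : ℝ, η x = 1 - ‖u x‖ ^ 2)
    (hK : ∀ x : ℝ, K x = ‖deriv u x‖ ^ 2)
    (h1 : Filter.Tendsto η Filter.atTop (nhds 0))
    (h2 : Filter.Tendsto (deriv η) Filter.atTop (nhds 0))
    (h3 : Filter.Tendsto K Filter.atTop (nhds 0))
    (h4 : Filter.Tendsto V Filter.atTop (nhds 0))
    (h5 : ∀ x : ℝ, c / 2 * η x = -(Complex.I * deriv u x * (starRingEnd ℂ) (u x)).re) :
    ∀ x : ℝ, c ^ 2 * η x ^ 2 + (deriv η x) ^ 2 = 4 * K x * (1 - η x) :=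
  stmt4_general c u hu η K hη hK h5
end

section
/- Let c > 0 and let u be a C² solution of the traveling wave equation i c u' + u'' + u·V = 0 (V continuous real) such that the identity c²η² + (η')² = 4K(1−η) holds on ℝ, where η = 1 − |u|², K = |u'|². If η ≤ 1 on ℝ, then η < 1 on ℝ, i.e. u never vanishes. -/
theorem lt_of_forall_le_of_deriv_eq_zero_imp_ne {f : ℝ → ℝ} {M : ℝ} (hle : ∀ x, f x ≤ M)
    (hcrit : ∀ x, deriv f x = 0 → f x ≠ M) (x : ℝ) : f x < M :=
  (hle x).lt_of_ne fun hx =>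
    hcrit x (IsLocalMax.deriv_eq_zero <| .of_forall fun y => hx ▸ hle y) hx

theorem stmt5_general (c : ℝ) (hc : 0 < c) (u : ℝ → ℂ)
    (η K : ℝ → ℝ)
    (hη : ∀ x : ℝ, η x = 1 - (‖u x‖) ^ 2)
    (hid : ∀ x : ℝ, c ^ 2 * η x ^ 2 + (deriv η x) ^ 2 = 4 * K x * (1 - η x))
    (hle : ∀ x : ℝ, η x ≤ 1) :
    (∀ x : ℝ, η x < 1) ∧ ∀ x : ℝ, u x ≠ 0 := by
  have hlt : ∀ x, η x < 1 := lt_of_forall_le_of_deriv_eq_zero_imp_ne hle fun x hcrit hmax => by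
    have hc_sq : c ^ 2 = 0 := by simpa [hcrit, hmax] using hid x
    exact hc.ne' (pow_eq_zero_iff two_ne_zero |>.mp hc_sq)
  refine ⟨hlt, fun x hu => ?_⟩
  simpa [hη x, hu] using hlt x

/-- Let `c > 0` and `u` a C² solution of `i c u' + u'' + u V = 0` (`V`
continuous real) such that `c²η² + (η')² = 4K(1−η)` holds on `ℝ`, where `η = 1 − |u|²`
and `K = |u'|²`. If `η ≤ 1` on `ℝ`, then `η < 1` on `ℝ`, i.e. `u` never vanishes. -/
theorem stmt5 (c : ℝ) (hc : 0 < c) (V : ℝ → ℝ) (hV : Continuous V) (u : ℝ → ℂ)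
    (hu : ContDiff ℝ 2 u)
    (heq : ∀ x : ℝ,
      Complex.I * (c : ℂ) * deriv u x + deriv (deriv u) x + u x * (V x : ℂ) = 0)
    (η K : ℝ → ℝ)
    (hη : ∀ x : ℝ, η x = 1 - (‖u x‖) ^ 2)
    (hK : ∀ x : ℝ, K x = (‖deriv u x‖) ^ 2)
    (hid : ∀ x : ℝ, c ^ 2 * η x ^ 2 + (deriv η x) ^ 2 = 4 * K x * (1 - η x))
    (hle : ∀ x : ℝ, η x ≤ 1) :
    (∀ x : ℝ, η x < 1) ∧ ∀ x : ℝ, u x ≠ 0 :=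
  stmt5_general c hc u η K hη hid hle
end
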